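/- Let X and Y be Banach spaces, let T : X → Y be a bounded linear operator that is bounded below, and let C ⊆ X be a bounded set. If x₀ ∈ C satisfies ‖T x₀‖ = sup {‖Tx‖ : x ∈ C} and T x₀ is a rotund point of Y, then for every norm-one y* ∈ Y* with Re y*(T x₀) = sup {‖Tx‖ : x ∈ C}, the functional T* y* exposes C at x₀, i.e., Re (T*y*)(x₀) = sup_{x∈C} Re (T*y*)(x) and x₀ is the unique point of C at which this supremum is attained. -/
import Mathlib


open Filter Topology RCLike Bornology

/-- `f` strongly exposes the bounded set `C` at `x₀`. -/
def StronglyExposes {𝕜 X : Type} [RCLike 𝕜] [NormedAddCommGroup X] [NormedSpace 𝕜 X]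
    (f : X →L[𝕜] 𝕜) (C : Set X) (x₀ : X) : Prop :=
  x₀ ∈ C ∧ (∀ x ∈ C, re (f x) ≤ re (f x₀)) ∧
    ∀ u : ℕ → X, (∀ n, u n ∈ C) →
      Tendsto (fun n => re (f (u n))) atTop (𝓝 (re (f x₀))) →
      Tendsto u atTop (𝓝 x₀)

/-- `f` strongly exposes the closed unit ball at `x₀`. -/
def StronglyExposesBall {𝕜 X : Type} [RCLike 𝕜] [NormedAddCommGroup X] [NormedSpace 𝕜 X]
    (f : X →L[𝕜] 𝕜) (x₀ : X) : Prop :=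
  ‖x₀‖ ≤ 1 ∧ re (f x₀) = ‖f‖ ∧
    ∀ u : ℕ → X, (∀ n, ‖u n‖ ≤ 1) →
      Tendsto (fun n => re (f (u n))) atTop (𝓝 ‖f‖) →
      Tendsto u atTop (𝓝 x₀)

/-- `T` absolutely strongly exposes the closed unit ball at `x₀`. -/
def AbsStronglyExposes {𝕜 X Y : Type} [RCLike 𝕜] [NormedAddCommGroup X] [NormedSpace 𝕜 X]
    [NormedAddCommGroup Y] [NormedSpace 𝕜 Y] (T : X →L[𝕜] Y) (x₀ : X) : Prop :=
  ‖x₀‖ ≤ 1 ∧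
    ∀ u : ℕ → X, (∀ n, ‖u n‖ ≤ 1) →
      Tendsto (fun n => ‖T (u n)‖) atTop (𝓝 ‖T‖) →
      ∃ θ : ℕ → 𝕜, (∀ n, ‖θ n‖ = 1) ∧ Tendsto (fun n => θ n • u n) atTop (𝓝 x₀)

/-- A rotund point of a normed space. -/
def RotundPoint {Y : Type} [NormedAddCommGroup Y] (y₀ : Y) : Prop :=
  ∀ y : Y, ‖y‖ ≤ ‖y₀‖ → ‖y + y₀‖ = 2 * ‖y₀‖ → y = y₀

/-- `f` exposes the set `C` at `x₀`. -/
def Exposes {𝕜 X : Type} [RCLike 𝕜] [NormedAddCommGroup X] [NormedSpace 𝕜 X]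
    (f : X →L[𝕜] 𝕜) (C : Set X) (x₀ : X) : Prop :=
  x₀ ∈ C ∧ (∀ x ∈ C, re (f x) ≤ re (f x₀)) ∧
    ∀ x ∈ C, re (f x) = re (f x₀) → x = x₀

theorem stmt1 {𝕜 X Y : Type} [RCLike 𝕜]
    [NormedAddCommGroup X] [NormedSpace 𝕜 X] [CompleteSpace X]
    [NormedAddCommGroup Y] [NormedSpace 𝕜 Y] [CompleteSpace Y]
    (T : X →L[𝕜] Y) (c : ℝ) (hc : 0 < c) (hbelow : ∀ x, c * ‖x‖ ≤ ‖T x‖)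
    (C : Set X) (hC : IsBounded C)
    (x₀ : X) (hx₀ : x₀ ∈ C) (hmax : ∀ x ∈ C, ‖T x‖ ≤ ‖T x₀‖)
    (hrot : RotundPoint (T x₀))
    (g : Y →L[𝕜] 𝕜) (hg : ‖g‖ = 1) (hre : re (g (T x₀)) = ‖T x₀‖) :
    Exposes (g.comp T) C x₀ := by
  have key : ∀ y : Y, re (g y) ≤ ‖y‖ := by
    intro y
    calc re (g y) ≤ ‖g y‖ := RCLike.re_le_norm _
    _ ≤ ‖g‖ * ‖y‖ := g.le_opNorm y
    _ = ‖y‖ := by rw [hg, one_mul]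
  have hle : ∀ x ∈ C, re ((g.comp T) x) ≤ re ((g.comp T) x₀) := by
    intro x hx
    simp only [ContinuousLinearMap.comp_apply, hre]
    exact (key (T x)).trans (hmax x hx)
  refine ⟨hx₀, hle, fun x hx heq => ?_⟩
  simp only [ContinuousLinearMap.comp_apply, hre] at heq
  have h1 : ‖T x‖ = ‖T x₀‖ := le_antisymm (hmax x hx) (heq ▸ key (T x))
  have h2 : ‖T x + T x₀‖ = 2 * ‖T x₀‖ := by
    refine le_antisymm ?_ ?_
    · calc ‖T x + T x₀‖ ≤ ‖T x‖ + ‖T x₀‖ := norm_add_le _ _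
      _ ≤ ‖T x₀‖ + ‖T x₀‖ := by linarith [hmax x hx]
      _ = 2 * ‖T x₀‖ := by ring
    · calc (2:ℝ) * ‖T x₀‖ = re (g (T x)) + re (g (T x₀)) := by rw [heq, hre]; ring
      _ = re (g (T x + T x₀)) := by rw [map_add, map_add]
      _ ≤ ‖T x + T x₀‖ := key _
  have hTx : T x = T x₀ := hrot (T x) h1.le h2
  have : c * ‖x - x₀‖ ≤ 0 := by
    have := hbelow (x - x₀)
    rwa [map_sub, hTx, sub_self, norm_zero] at this
  have hxx : x - x₀ = 0 := by
    apply norm_eq_zero.mp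
    nlinarith [norm_nonneg (x - x₀)]
  exact sub_eq_zero.mp hxx
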